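/- For every real x ≥ 0, 1 - Φ(x) < 2φ(x)/(√(2 + x²) + x) (Komatu's upper bound). -/

import Mathlib

open MeasureTheory Real

/-- Standard Gaussian density. -/
noncomputable def gaussPdf (x : ℝ) : ℝ := Real.exp (-x ^ 2 / 2) / Real.sqrt (2 * Real.pi)

/-- Standard Gaussian distribution function. -/
noncomputable def gaussCdf (x : ℝ) : ℝ := ∫ t in Set.Iic x, gaussPdf t

/-- Finite continued fraction `hcf k g x = x + 1/(x + 2/(⋯ + k/(g x)))`,
with `hcf 0 g = g`. -/
noncomputable def hcf : ℕ → (ℝ → ℝ) → ℝ → ℝ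
  | 0, g => g
  | (k + 1), g => hcf k (fun x => x + ((k : ℝ) + 1) / g x)

/-!
Write `s = √(2 + x²)` and `K(x) = φ(x) (s - x) = 2 φ(x) / (s + x)`. Then `K → 0` at infinity and
`-K' = φ · (1 + x (s - x - 1/s))`, where `1/s < s - x` because `(x s)² = x⁴ + 2x² < (1 + x²)²`.
So `-K' > φ` on `(0, ∞)`, and integrating over `(x, ∞)` gives `1 - Φ(x) = ∫ φ < ∫ -K' = K(x)`.
-/

open Set Filter Topology

theorem setIntegral_pos_of_forall_pos {α : Type*} [MeasurableSpace α] {μ : Measure α}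
    {s : Set α} {f : α → ℝ} (hs : MeasurableSet s) (hμs : μ s ≠ 0) (hf : IntegrableOn f s μ)
    (hpos : ∀ t ∈ s, 0 < f t) : 0 < ∫ t in s, f t ∂μ := by
  have hsupp : Function.support f ∩ s = s := inter_eq_right.2 fun t ht => (hpos t ht).ne'
  rw [setIntegral_pos_iff_support_of_nonneg_ae
    (ae_restrict_of_forall_mem hs fun t ht => (hpos t ht).le) hf, hsupp]
  exact pos_iff_ne_zero.2 hμs

theorem setIntegral_Ioi_lt_of_lt_neg_deriv {f g G : ℝ → ℝ} {x l : ℝ}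
    (hG : ∀ t ∈ Ici x, HasDerivAt G (g t) t) (hG_top : Tendsto G atTop (𝓝 l))
    (hf : IntegrableOn f (Ioi x)) (hf_nonneg : ∀ t ∈ Ioi x, 0 ≤ f t)
    (hfg : ∀ t ∈ Ioi x, f t < -g t) :
    ∫ t in Ioi x, f t < G x - l := by
  have hg_nonpos : ∀ t ∈ Ioi x, g t ≤ 0 := fun t ht => by linarith [hf_nonneg t ht, hfg t ht]
  have hg : IntegrableOn g (Ioi x) := integrableOn_Ioi_deriv_of_nonpos' hG hg_nonpos hG_top
  have hgap : 0 < ∫ t in Ioi x, (-g t - f t) :=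
    setIntegral_pos_of_forall_pos measurableSet_Ioi (by simp) (hg.neg.sub hf)
      fun t ht => sub_pos.2 (hfg t ht)
  rw [integral_sub (f := fun t => -g t) hg.neg hf, integral_neg,
    integral_Ioi_of_hasDerivAt_of_nonpos' hG hg_nonpos hG_top] at hgap
  linarith

theorem gaussPdf_eq_gaussianPDFReal : gaussPdf = ProbabilityTheory.gaussianPDFReal 0 1 := by
  ext x
  simp [gaussPdf, ProbabilityTheory.gaussianPDFReal, div_eq_inv_mul]

theorem gaussPdf_pos (x : ℝ) : 0 < gaussPdf x := by
  unfold gaussPdf; positivity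

theorem integrable_gaussPdf : Integrable gaussPdf :=
  gaussPdf_eq_gaussianPDFReal ▸ ProbabilityTheory.integrable_gaussianPDFReal 0 1

theorem one_sub_gaussCdf (x : ℝ) : 1 - gaussCdf x = ∫ t in Ioi x, gaussPdf t := by
  have htotal : ∫ t, gaussPdf t = 1 :=
    gaussPdf_eq_gaussianPDFReal ▸ ProbabilityTheory.integral_gaussianPDFReal_eq_one 0 one_ne_zero
  rw [← htotal, ← intervalIntegral.integral_Iic_add_Ioi integrable_gaussPdf.integrableOn
    integrable_gaussPdf.integrableOn, gaussCdf, add_sub_cancel_left]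

theorem hasDerivAt_gaussPdf (x : ℝ) : HasDerivAt gaussPdf (-x * gaussPdf x) x := by
  have hexp : HasDerivAt (fun t : ℝ => -t ^ 2 / 2) (-x) x := by
    simpa using ((hasDerivAt_pow 2 x).fun_neg.div_const 2).congr_deriv (by ring)
  refine (hexp.exp.div_const √(2 * π)).congr_deriv ?_
  unfold gaussPdf; ring

theorem tendsto_gaussPdf_atTop : Tendsto gaussPdf atTop (𝓝 0) := by
  have h : Tendsto (fun x : ℝ => -x ^ 2 / 2) atTop atBot :=
    (tendsto_neg_atTop_atBot.comp (tendsto_pow_atTop two_ne_zero)).atBot_div_const two_pos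
  have := (tendsto_exp_atBot.comp h).div_const √(2 * π)
  rwa [zero_div] at this

noncomputable def komatuBound (x : ℝ) : ℝ := gaussPdf x * (√(2 + x ^ 2) - x)

theorem sqrt_two_add_sq_sub_eq (x : ℝ) : √(2 + x ^ 2) - x = 2 / (√(2 + x ^ 2) + x) := by
  have hsq : √(2 + x ^ 2) ^ 2 = 2 + x ^ 2 := sq_sqrt (by positivity)
  have hlt : |x| < √(2 + x ^ 2) := by
    rw [← sqrt_sq_eq_abs]; exact sqrt_lt_sqrt (sq_nonneg x) (by linarith)
  have hden : 0 < √(2 + x ^ 2) + x := by linarith [neg_abs_le x]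
  rw [eq_div_iff hden.ne']
  linear_combination hsq

theorem inv_sqrt_two_add_sq_lt (x : ℝ) : (√(2 + x ^ 2))⁻¹ < √(2 + x ^ 2) - x := by
  have hsq : √(2 + x ^ 2) ^ 2 = 2 + x ^ 2 := sq_sqrt (by positivity)
  have hpos : 0 < √(2 + x ^ 2) := sqrt_pos.2 (by positivity)
  rw [inv_lt_iff_one_lt_mul₀' hpos]
  nlinarith [sq_nonneg (x * √(2 + x ^ 2) - (1 + x ^ 2))]

theorem komatuBound_eq_div (x : ℝ) :
    komatuBound x = 2 * gaussPdf x / (√(2 + x ^ 2) + x) := by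
  rw [komatuBound, sqrt_two_add_sq_sub_eq, mul_div_assoc']
  ring

theorem hasDerivAt_komatuBound (x : ℝ) :
    HasDerivAt komatuBound
      (-(gaussPdf x * (1 + x * (√(2 + x ^ 2) - x - (√(2 + x ^ 2))⁻¹)))) x := by
  have hsqrt : HasDerivAt (fun t : ℝ => √(2 + t ^ 2)) (x / √(2 + x ^ 2)) x := by
    have hinner : HasDerivAt (fun t : ℝ => 2 + t ^ 2) (2 * x) x := by
      simpa using (hasDerivAt_pow 2 x).const_add 2
    exact (hinner.sqrt (by positivity)).congr_deriv (by field_simp)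
  refine ((hasDerivAt_gaussPdf x).mul (hsqrt.fun_sub (hasDerivAt_id' x))).congr_deriv ?_
  field_simp
  ring

theorem tendsto_komatuBound_atTop : Tendsto komatuBound atTop (𝓝 0) := by
  have hden : Tendsto (fun x : ℝ => √(2 + x ^ 2) + x) atTop atTop :=
    Tendsto.nonneg_add_atTop (fun x => sqrt_nonneg _) tendsto_id
  have h := (tendsto_gaussPdf_atTop.const_mul 2).div_atTop hden
  exact h.congr fun x => (komatuBound_eq_div x).symm

/-- Komatu's upper bound. -/
theorem komatu_upper_bound (x : ℝ) (hx : 0 ≤ x) :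
    1 - gaussCdf x < 2 * gaussPdf x / (Real.sqrt (2 + x ^ 2) + x) := by
  rw [one_sub_gaussCdf, ← komatuBound_eq_div, ← sub_zero (komatuBound x)]
  refine setIntegral_Ioi_lt_of_lt_neg_deriv (fun t _ => hasDerivAt_komatuBound t)
    tendsto_komatuBound_atTop integrable_gaussPdf.integrableOn (fun t _ => (gaussPdf_pos t).le)
    fun t ht => ?_
  have hgap : 0 < t * (√(2 + t ^ 2) - t - (√(2 + t ^ 2))⁻¹) :=
    mul_pos (hx.trans_lt ht) (sub_pos.2 (inv_sqrt_two_add_sq_lt t))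
  rw [neg_neg]
  exact lt_mul_of_one_lt_right (gaussPdf_pos t) (lt_add_of_pos_right 1 hgap)
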